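/- arXiv:2402.14260 — 5 statements merged into one kernel-verified Lean document; each statement's English description precedes it below -/
import Mathlib

section
/- Let Σ_W be a p×p symmetric positive definite matrix, M a p×L real matrix, and D_π an L×L diagonal matrix with strictly positive diagonal entries π_1,...,π_L. Define Σ = Σ_W + M D_π Mᵀ. Then Σ is positive definite, the matrix B := Σ⁻¹ M D_π and the matrix H := D_π − Bᵀ Σ B satisfy: H is invertible and Σ_W⁻¹ M = B H⁻¹. -/
/-!
Write `Σ = Σ_W + U V` with `U = M`, `V = D_π Mᵀ`. The resolvent identity
`Σ_W⁻¹ - Σ⁻¹ = Σ_W⁻¹ U V Σ⁻¹` gives the push-through identity `Σ_W⁻¹ U (1 - V Σ⁻¹ U) = Σ⁻¹ U`,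
and hence `(1 + V Σ_W⁻¹ U) (1 - V Σ⁻¹ U) = 1`. Since `Σ` is symmetric, `Bᵀ Σ B = D_π Mᵀ Σ⁻¹ M D_π`,
so `H = (1 - V Σ⁻¹ U) D_π` is invertible and `Σ_W⁻¹ M H = Σ⁻¹ M D_π = B`.
-/

open Matrix

namespace Matrix

variable {n l R : Type*} [Fintype n] [DecidableEq n] [CommRing R]

theorem transpose_inv_mul_mul_mul_inv_mul {S : Matrix n n R} (hS : IsUnit S.det)
    (hSsymm : S.IsSymm) (N : Matrix n l R) : (S⁻¹ * N)ᵀ * S * (S⁻¹ * N) = Nᵀ * S⁻¹ * N := by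
  rw [transpose_mul, transpose_nonsing_inv, hSsymm.eq, Matrix.mul_assoc, Matrix.mul_assoc,
    mul_nonsing_inv_cancel_left _ _ hS, Matrix.mul_assoc]

section LowRankUpdate

variable [Fintype l] [DecidableEq l] {W S : Matrix n n R} (U : Matrix n l R) (V : Matrix l n R)

theorem inv_mul_mul_one_sub_mul_inv_mul (hW : IsUnit W.det) (hS : IsUnit S.det)
    (hSWUV : S = W + U * V) : W⁻¹ * U * (1 - V * S⁻¹ * U) = S⁻¹ * U := by
  have hWS : IsUnit W ↔ IsUnit S :=
    iff_of_true ((isUnit_iff_isUnit_det W).2 hW) ((isUnit_iff_isUnit_det S).2 hS)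
  have hres : W⁻¹ - S⁻¹ = W⁻¹ * (U * V) * S⁻¹ := by
    rw [inv_sub_inv hWS, hSWUV, add_sub_cancel_left]
  calc W⁻¹ * U * (1 - V * S⁻¹ * U)
      = W⁻¹ * U - W⁻¹ * (U * V) * S⁻¹ * U := by
        simp only [Matrix.mul_sub, Matrix.mul_one, Matrix.mul_assoc]
    _ = S⁻¹ * U := by rw [← hres, Matrix.sub_mul, sub_sub_cancel]

theorem one_add_mul_inv_mul_mul_one_sub_mul_inv_mul (hW : IsUnit W.det) (hS : IsUnit S.det)
    (hSWUV : S = W + U * V) : (1 + V * W⁻¹ * U) * (1 - V * S⁻¹ * U) = 1 := by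
  calc (1 + V * W⁻¹ * U) * (1 - V * S⁻¹ * U)
      = 1 - V * S⁻¹ * U + V * (W⁻¹ * U * (1 - V * S⁻¹ * U)) := by
        simp only [Matrix.add_mul, Matrix.one_mul, Matrix.mul_assoc]
    _ = 1 := by
      rw [inv_mul_mul_one_sub_mul_inv_mul U V hW hS hSWUV, Matrix.mul_assoc, sub_add_cancel]

end LowRankUpdate

end Matrix

theorem stmt_0 {p L : ℕ} (Sw : Matrix (Fin p) (Fin p) ℝ) (M : Matrix (Fin p) (Fin L) ℝ)
    (π : Fin L → ℝ) (hπ : ∀ ℓ, 0 < π ℓ) (hSw : Sw.PosDef) :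
    let Dπ := Matrix.diagonal π
    let S := Sw + M * Dπ * Mᵀ
    let B := S⁻¹ * M * Dπ
    let H := Dπ - Bᵀ * S * B
    S.PosDef ∧ IsUnit H.det ∧ Sw⁻¹ * M = B * H⁻¹ := by
  intro Dπ S B H
  have hS : S.PosDef := hSw.add_posSemidef <| by
    simpa using (posSemidef_diagonal_iff.mpr fun ℓ ↦ (hπ ℓ).le).mul_mul_conjTranspose_same M
  have hSdet : IsUnit S.det := hS.det_pos.ne'.isUnit
  have hSwdet : IsUnit Sw.det := hSw.det_pos.ne'.isUnit
  have hDdet : IsUnit Dπ.det := by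
    rw [det_diagonal]
    exact (Finset.prod_pos fun ℓ _ ↦ hπ ℓ).ne'.isUnit
  have hSWUV : S = Sw + M * (Dπ * Mᵀ) := by rw [← Matrix.mul_assoc]
  have hH : H = (1 - Dπ * Mᵀ * S⁻¹ * M) * Dπ := by
    have hBSB : Bᵀ * S * B = Dπ * Mᵀ * S⁻¹ * M * Dπ := by
      rw [show B = S⁻¹ * (M * Dπ) from Matrix.mul_assoc _ _ _,
        transpose_inv_mul_mul_mul_inv_mul hSdet (isHermitian_iff_isSymm.mp hS.isHermitian),
        transpose_mul, show Dπᵀ = Dπ from diagonal_transpose π]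
      simp only [Matrix.mul_assoc]
    rw [show H = Dπ - Bᵀ * S * B from rfl, hBSB, Matrix.sub_mul, Matrix.one_mul]
  have hHdet : IsUnit H.det := by
    rw [hH, det_mul]
    exact (isUnit_det_of_left_inverse
      (one_add_mul_inv_mul_mul_one_sub_mul_inv_mul M _ hSwdet hSdet hSWUV)).mul hDdet
  have hB : Sw⁻¹ * M * H = B := by
    rw [hH, ← Matrix.mul_assoc, inv_mul_mul_one_sub_mul_inv_mul M _ hSwdet hSdet hSWUV]
  exact ⟨hS, hHdet, by rw [← hB, mul_nonsing_inv_cancel_right _ _ hHdet]⟩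
end

section
/- Under the setup Σ = Σ_W + M D_π Mᵀ with Σ_W symmetric positive definite and D_π diagonal positive, letting B = Σ⁻¹ M D_π and Ω = D_π⁻¹ + Mᵀ Σ_W⁻¹ M, one has Bᵀ Σ_W B = Ω⁻¹ (Mᵀ Σ_W⁻¹ M) Ω⁻¹. -/
open Matrix

theorem stmt_5 {p L : ℕ} (Sw : Matrix (Fin p) (Fin p) ℝ) (M : Matrix (Fin p) (Fin L) ℝ)
    (π : Fin L → ℝ) (hπ : ∀ ℓ, 0 < π ℓ) (hSw : Sw.PosDef) :
    let Dπ := Matrix.diagonal π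
    let S := Sw + M * Dπ * Mᵀ
    let B := S⁻¹ * M * Dπ
    let Ω := Dπ⁻¹ + Mᵀ * Sw⁻¹ * M
    Bᵀ * Sw * B = Ω⁻¹ * (Mᵀ * Sw⁻¹ * M) * Ω⁻¹ := by
  intro Dπ S B Ω
  have hDπ : Dπ.PosDef := Matrix.posDef_diagonal_iff.mpr hπ
  have hSwinv : Sw⁻¹.PosDef := hSw.inv
  have hS : S.PosDef := by
    have h1 : (M * Dπ * Mᵀ).PosSemidef := by
      have := hDπ.posSemidef.mul_mul_conjTranspose_same M
      rwa [conjTranspose_eq_transpose_of_trivial] at this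
    exact hSw.add_posSemidef h1
  have hΩ : Ω.PosDef := by
    have h1 : (Mᵀ * Sw⁻¹ * M).PosSemidef := by
      have := hSwinv.posSemidef.mul_mul_conjTranspose_same Mᵀ
      rwa [conjTranspose_eq_transpose_of_trivial, transpose_transpose] at this
    exact hDπ.inv.add_posSemidef h1
  have hSd : IsUnit S.det := isUnit_iff_ne_zero.mpr hS.det_pos.ne'
  have hΩd : IsUnit Ω.det := isUnit_iff_ne_zero.mpr hΩ.det_pos.ne'
  have hSwd : IsUnit Sw.det := isUnit_iff_ne_zero.mpr hSw.det_pos.ne'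
  have hDπd : IsUnit Dπ.det := isUnit_iff_ne_zero.mpr hDπ.det_pos.ne'
  have key : S * (Sw⁻¹ * M * Ω⁻¹) = M * Dπ := by
    have expand : S * (Sw⁻¹ * M * Ω⁻¹) = M * Dπ * Ω * Ω⁻¹ := by
      simp only [S, Ω, Matrix.add_mul, Matrix.mul_add, ← Matrix.mul_assoc]
      rw [Matrix.mul_nonsing_inv Sw hSwd, Matrix.one_mul,
        Matrix.mul_nonsing_inv_cancel_right Dπ M hDπd]
    rw [expand, Matrix.mul_nonsing_inv_cancel_right Ω (M * Dπ) hΩd]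
  have hB : B = Sw⁻¹ * M * Ω⁻¹ := by
    have h := congrArg (fun X => S⁻¹ * X) key
    rw [Matrix.nonsing_inv_mul_cancel_left S _ hSd] at h
    simp only [B, Matrix.mul_assoc] at h ⊢
    exact h.symm
  have hΩsymm : Ω⁻¹ᵀ = Ω⁻¹ := by
    have := hΩ.isHermitian.inv
    rwa [Matrix.IsHermitian, conjTranspose_eq_transpose_of_trivial] at this
  have hSwsymm : Sw⁻¹ᵀ = Sw⁻¹ := by
    have := hSw.isHermitian.inv
    rwa [Matrix.IsHermitian, conjTranspose_eq_transpose_of_trivial] at this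
  rw [hB, transpose_mul, transpose_mul, hΩsymm, hSwsymm]
  rw [Matrix.mul_assoc Sw⁻¹ M Ω⁻¹,
    Matrix.mul_assoc (Ω⁻¹ * (Mᵀ * Sw⁻¹)) Sw (Sw⁻¹ * (M * Ω⁻¹)),
    Matrix.mul_nonsing_inv_cancel_left Sw (M * Ω⁻¹) hSwd]
  simp only [Matrix.mul_assoc]
end

section
/- In the setup Σ = Σ_W + M D_π Mᵀ (Σ_W symmetric positive definite, D_π diagonal positive) with B = Σ⁻¹ M D_π and columns B_ℓ = B e_ℓ, μ_ℓ = M e_ℓ, one has for every ℓ: B_ℓᵀ Σ_W B_ℓ ≤ B_ℓᵀ Σ B_ℓ = π_ℓ² μ_ℓᵀ Σ⁻¹ μ_ℓ ≤ π_ℓ. -/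
/-!
The first claim holds because `M D_π Mᵀ` is positive semidefinite. For the rest, the column
`B_ℓ` equals `π_ℓ Σ⁻¹ μ_ℓ`, so `B_ℓᵀ Σ B_ℓ = π_ℓ² t` with `t = μ_ℓᵀ Σ⁻¹ μ_ℓ ≥ 0`. Since
`Σ ⪰ M D_π Mᵀ ⪰ π_ℓ μ_ℓ μ_ℓᵀ`, evaluating both quadratic forms at `Σ⁻¹ μ_ℓ` gives
`t ≥ π_ℓ t²`, i.e. `π_ℓ t ≤ 1`, whence `π_ℓ² t ≤ π_ℓ`.
-/

open Matrix

namespace Matrix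

variable {n m : Type*} [Fintype n] [Fintype m]

theorem dotProduct_mul_diagonal_mul_transpose_mulVec {R : Type*} [CommRing R] [DecidableEq m]
    (M : Matrix n m R) (d : m → R) (x : n → R) :
    x ⬝ᵥ (M * diagonal d * Mᵀ) *ᵥ x = ∑ k, d k * (Mᵀ *ᵥ x) k ^ 2 := by
  rw [← mulVec_mulVec, ← mulVec_mulVec, dotProduct_mulVec, ← mulVec_transpose]
  simp only [dotProduct, mulVec_diagonal]
  exact Finset.sum_congr rfl fun k _ => by ring

theorem posSemidef_mul_diagonal_mul_transpose [DecidableEq m] (M : Matrix n m ℝ) {d : m → ℝ}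
    (hd : ∀ k, 0 ≤ d k) : (M * diagonal d * Mᵀ).PosSemidef := by
  simpa using (posSemidef_diagonal_iff.mpr hd).mul_mul_conjTranspose_same M

theorem mul_sq_le_dotProduct_mul_diagonal_mul_transpose_mulVec [DecidableEq m]
    (M : Matrix n m ℝ) {d : m → ℝ} (hd : ∀ k, 0 ≤ d k) (x : n → ℝ) (ℓ : m) :
    d ℓ * ((fun i => M i ℓ) ⬝ᵥ x) ^ 2 ≤ x ⬝ᵥ (M * diagonal d * Mᵀ) *ᵥ x := by
  rw [dotProduct_mul_diagonal_mul_transpose_mulVec]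
  exact Finset.single_le_sum (f := fun k => d k * (Mᵀ *ᵥ x) k ^ 2)
    (fun k _ => mul_nonneg (hd k) (sq_nonneg _)) (Finset.mem_univ ℓ)

theorem column_mul_mul_diagonal {R : Type*} [CommSemiring R] [DecidableEq m]
    (A : Matrix n n R) (M : Matrix n m R) (d : m → R) (ℓ : m) :
    (fun i => (A * M * diagonal d) i ℓ) = d ℓ • A *ᵥ (fun i => M i ℓ) := by
  funext i
  rw [mul_diagonal]
  simp only [mul_apply, Finset.sum_mul, Pi.smul_apply, mulVec, dotProduct, smul_eq_mul,
    Finset.mul_sum]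
  exact Finset.sum_congr rfl fun k _ => by ring

theorem inv_mulVec_dotProduct_mulVec_inv_mulVec {R : Type*} [CommRing R] [DecidableEq n]
    {S : Matrix n n R} (hS : IsUnit S) (v : n → R) :
    (S⁻¹ *ᵥ v) ⬝ᵥ S *ᵥ (S⁻¹ *ᵥ v) = v ⬝ᵥ S⁻¹ *ᵥ v := by
  rw [mulVec_mulVec, mul_nonsing_inv _ ((isUnit_iff_isUnit_det S).mp hS), one_mulVec,
    dotProduct_comm]

theorem mul_dotProduct_inv_mulVec_le_one [DecidableEq n] {S : Matrix n n ℝ} (hS : S.PosDef)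
    {c : ℝ} {v : n → ℝ} (h : ∀ x, c * (v ⬝ᵥ x) ^ 2 ≤ x ⬝ᵥ S *ᵥ x) :
    c * (v ⬝ᵥ S⁻¹ *ᵥ v) ≤ 1 := by
  set t := v ⬝ᵥ S⁻¹ *ᵥ v
  have ht : 0 ≤ t := by simpa using hS.inv.posSemidef.dotProduct_mulVec_nonneg v
  -- `t` is also the quadratic form of `S` at `S⁻¹ v`, so the hypothesis there reads `c t² ≤ t`.
  have hct : c * t ^ 2 ≤ t := by
    simpa only [inv_mulVec_dotProduct_mulVec_inv_mulVec hS.isUnit] using h (S⁻¹ *ᵥ v)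
  rcases ht.eq_or_lt with ht0 | ht0
  · rw [← ht0, mul_zero]
    exact zero_le_one
  · exact le_of_mul_le_mul_right (by linarith) ht0

end Matrix

theorem stmt_7 {p L : ℕ} (Sw : Matrix (Fin p) (Fin p) ℝ) (M : Matrix (Fin p) (Fin L) ℝ)
    (π : Fin L → ℝ) (hπ : ∀ ℓ, 0 < π ℓ) (hSw : Sw.PosDef) :
    let S := Sw + M * Matrix.diagonal π * Mᵀ
    let B := S⁻¹ * M * Matrix.diagonal π
    ∀ ℓ : Fin L,
      (fun i => B i ℓ) ⬝ᵥ Sw *ᵥ (fun i => B i ℓ) ≤ (fun i => B i ℓ) ⬝ᵥ S *ᵥ (fun i => B i ℓ) ∧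
      (fun i => B i ℓ) ⬝ᵥ S *ᵥ (fun i => B i ℓ) =
        (π ℓ) ^ 2 * ((fun i => M i ℓ) ⬝ᵥ S⁻¹ *ᵥ (fun i => M i ℓ)) ∧
      (π ℓ) ^ 2 * ((fun i => M i ℓ) ⬝ᵥ S⁻¹ *ᵥ (fun i => M i ℓ)) ≤ π ℓ := by
  intro S B ℓ
  have hπ₀ : ∀ k, 0 ≤ π k := fun k => (hπ k).le
  have hMDM := posSemidef_mul_diagonal_mul_transpose M hπ₀
  have hS : S.PosDef := hSw.add_posSemidef hMDM
  have hSB : ∀ x, x ⬝ᵥ S *ᵥ x = x ⬝ᵥ Sw *ᵥ x + x ⬝ᵥ (M * diagonal π * Mᵀ) *ᵥ x := fun x => by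
    rw [add_mulVec, dotProduct_add]
  have hB : (fun i => B i ℓ) = π ℓ • S⁻¹ *ᵥ (fun i => M i ℓ) := column_mul_mul_diagonal _ _ _ _
  have hle : π ℓ * ((fun i => M i ℓ) ⬝ᵥ S⁻¹ *ᵥ (fun i => M i ℓ)) ≤ 1 :=
    mul_dotProduct_inv_mulVec_le_one hS fun x => by
      rw [hSB]
      have hSw₀ : 0 ≤ x ⬝ᵥ Sw *ᵥ x := by simpa using hSw.posSemidef.dotProduct_mulVec_nonneg x
      linarith [mul_sq_le_dotProduct_mul_diagonal_mul_transpose_mulVec M hπ₀ x ℓ]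
  refine ⟨?_, ?_, ?_⟩
  · rw [hSB]
    exact le_add_of_nonneg_right (by simpa using hMDM.dotProduct_mulVec_nonneg _)
  · rw [hB, mulVec_smul, dotProduct_smul, smul_dotProduct,
      inv_mulVec_dotProduct_mulVec_inv_mulVec hS.isUnit, smul_eq_mul, smul_eq_mul, ← mul_assoc, sq]
  · calc π ℓ ^ 2 * ((fun i => M i ℓ) ⬝ᵥ S⁻¹ *ᵥ (fun i => M i ℓ))
        = π ℓ * (π ℓ * ((fun i => M i ℓ) ⬝ᵥ S⁻¹ *ᵥ (fun i => M i ℓ))) := by ring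
      _ ≤ π ℓ * 1 := mul_le_mul_of_nonneg_left hle (hπ₀ ℓ)
      _ = π ℓ := mul_one _
end

section
/- In the setup Σ = Σ_W + M D_π Mᵀ (Σ_W symmetric positive definite, D_π diagonal positive) with B = Σ⁻¹ M D_π, for all k, ℓ one has |μ_kᵀ B_ℓ| ≤ π_ℓ √(μ_kᵀ Σ_W⁻¹ μ_k) √(μ_ℓᵀ Σ_W⁻¹ μ_ℓ), where μ_j denotes the j-th column of M and B_ℓ the ℓ-th column of B. -/
/-!
The `ℓ`-th column of `B` is `π ℓ • Σ⁻¹ μ_ℓ`, so `μ_kᵀ B_ℓ = π ℓ * μ_kᵀ Σ⁻¹ μ_ℓ`. Cauchy–Schwarz for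
the positive definite form `Σ⁻¹` bounds `|μ_kᵀ Σ⁻¹ μ_ℓ|` by the product of the `Σ⁻¹`-norms of `μ_k`
and `μ_ℓ`, and `Σ_W ≤ Σ` in the Loewner order gives `xᵀ Σ⁻¹ x ≤ xᵀ Σ_W⁻¹ x`.
-/

open Matrix
open scoped MatrixOrder

theorem Matrix.mul_mul_diagonal_col {m n o α : Type*} [Fintype n] [Fintype o] [DecidableEq o]
    [CommSemiring α] (A : Matrix m n α) (N : Matrix n o α) (d : o → α) (ℓ : o) :
    (fun i => (A * N * diagonal d) i ℓ) = d ℓ • A *ᵥ fun j => N j ℓ := by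
  ext i
  rw [mul_diagonal]
  simp [mulVec, dotProduct, mul_apply, mul_comm]

section

variable {n : Type*} [Fintype n] [DecidableEq n]

theorem Matrix.PosSemidef.dotProduct_mulVec_sq_le {A : Matrix n n ℝ} (hA : A.PosSemidef)
    (x y : n → ℝ) : (x ⬝ᵥ A *ᵥ y) ^ 2 ≤ (x ⬝ᵥ A *ᵥ x) * (y ⬝ᵥ A *ᵥ y) := by
  have hsymm : LinearMap.IsSymm A.toBilin' := LinearMap.BilinForm.isSymm_iff.mp <|
    isSymm_toBilin'_iff_isSymm.mpr (isHermitian_iff_isSymm.mp hA.isHermitian)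
  simpa only [toBilin'_apply'] using LinearMap.BilinForm.apply_sq_le_of_symm A.toBilin'
    (fun v => by simpa only [toBilin'_apply', star_trivial] using hA.dotProduct_mulVec_nonneg v)
    hsymm x y

theorem Matrix.PosDef.dotProduct_inv_mulVec_le_of_le {S T : Matrix n n ℝ} (hT : T.PosDef)
    (hTS : T ≤ S) (x : n → ℝ) : x ⬝ᵥ S⁻¹ *ᵥ x ≤ x ⬝ᵥ T⁻¹ *ᵥ x := by
  have hS : S.PosDef := by simpa using hT.add_posSemidef (le_iff.mp hTS)
  set y := S⁻¹ *ᵥ x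
  set z := T⁻¹ *ᵥ x
  have hSy : S *ᵥ y = x := by
    rw [mulVec_mulVec, mul_nonsing_inv _ hS.det_pos.ne'.isUnit, one_mulVec]
  have hTz : T *ᵥ z = x := by
    rw [mulVec_mulVec, mul_nonsing_inv _ hT.det_pos.ne'.isUnit, one_mulVec]
  have hyTy : y ⬝ᵥ T *ᵥ y ≤ x ⬝ᵥ y := by
    have := (le_iff.mp hTS).dotProduct_mulVec_nonneg y
    simp only [star_trivial, sub_mulVec, dotProduct_sub, hSy] at this
    linarith [dotProduct_comm x y]
  have ha : 0 ≤ x ⬝ᵥ y := by simpa using hS.inv.posSemidef.dotProduct_mulVec_nonneg x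
  have hb : 0 ≤ x ⬝ᵥ z := by simpa using hT.inv.posSemidef.dotProduct_mulVec_nonneg x
  -- `xᵀ S⁻¹ x = yᵀ T z`, so Cauchy–Schwarz for `T` together with `yᵀ T y ≤ yᵀ S y = xᵀ S⁻¹ x`
  -- yields `(xᵀ S⁻¹ x)² ≤ (xᵀ S⁻¹ x) (xᵀ T⁻¹ x)`.
  have hcs : (x ⬝ᵥ y) ^ 2 ≤ (y ⬝ᵥ T *ᵥ y) * (x ⬝ᵥ z) := by
    simpa only [hTz, dotProduct_comm y x, dotProduct_comm z x]
      using hT.posSemidef.dotProduct_mulVec_sq_le y z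
  nlinarith

theorem Matrix.PosDef.abs_dotProduct_inv_mulVec_le_of_le {S T : Matrix n n ℝ} (hT : T.PosDef)
    (hTS : T ≤ S) (x y : n → ℝ) :
    |x ⬝ᵥ S⁻¹ *ᵥ y| ≤ √(x ⬝ᵥ T⁻¹ *ᵥ x) * √(y ⬝ᵥ T⁻¹ *ᵥ y) := by
  have hS : S.PosDef := by simpa using hT.add_posSemidef (le_iff.mp hTS)
  have hle := hT.dotProduct_inv_mulVec_le_of_le hTS
  have hnonneg (z : n → ℝ) : 0 ≤ z ⬝ᵥ S⁻¹ *ᵥ z := by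
    simpa using hS.inv.posSemidef.dotProduct_mulVec_nonneg z
  rw [← Real.sqrt_mul ((hnonneg x).trans (hle x))]
  refine Real.abs_le_sqrt ((hS.inv.posSemidef.dotProduct_mulVec_sq_le x y).trans ?_)
  exact mul_le_mul (hle x) (hle y) (hnonneg y) ((hnonneg x).trans (hle x))

end

theorem stmt_9 {p L : ℕ} (Sw : Matrix (Fin p) (Fin p) ℝ) (M : Matrix (Fin p) (Fin L) ℝ)
    (π : Fin L → ℝ) (hπ : ∀ ℓ, 0 < π ℓ) (hSw : Sw.PosDef) :
    let S := Sw + M * Matrix.diagonal π * Mᵀ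
    let B := S⁻¹ * M * Matrix.diagonal π
    ∀ k ℓ : Fin L,
      |(fun i => M i k) ⬝ᵥ (fun i => B i ℓ)| ≤
        π ℓ * Real.sqrt ((fun i => M i k) ⬝ᵥ Sw⁻¹ *ᵥ (fun i => M i k)) *
          Real.sqrt ((fun i => M i ℓ) ⬝ᵥ Sw⁻¹ *ᵥ (fun i => M i ℓ)) := by
  intro S B k ℓ
  have hD : (diagonal π).PosSemidef := PosSemidef.diagonal fun i => (hπ i).le
  have hSw_le : Sw ≤ S := le_iff.mpr (by simpa [S] using hD.mul_mul_conjTranspose_same M)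
  rw [mul_mul_diagonal_col, dotProduct_smul, smul_eq_mul, abs_mul, abs_of_pos (hπ ℓ), mul_assoc]
  exact mul_le_mul_of_nonneg_left (hSw.abs_dotProduct_inv_mulVec_le_of_le hSw_le _ _) (hπ ℓ).le
end

section
/- Consider the Lasso basic inequality setting: suppose (1/(2n))‖Xβ̂ − Xβ‖₂² ≤ (λ/2)‖β̂ − β‖₁ + λ‖β‖₁ − λ‖β̂‖₁ for vectors β, β̂ ∈ ℝ^p with λ > 0, and let S = supp(β). Then the error Δ = β̂ − β satisfies the cone condition ‖Δ_{S^c}‖₁ ≤ 3‖Δ_S‖₁. -/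
open Matrix

theorem stmt_18 {n p : ℕ} (hn : 0 < n) (X : Matrix (Fin n) (Fin p) ℝ)
    (β βhat : Fin p → ℝ) (lam : ℝ) (hlam : 0 < lam)
    (hbasic : (1 / (2 * (n : ℝ))) * ∑ i, ((X *ᵥ βhat) i - (X *ᵥ β) i) ^ 2 ≤
      (lam / 2) * ∑ j, |βhat j - β j| + lam * ∑ j, |β j| - lam * ∑ j, |βhat j|) :
    ∑ j ∈ Finset.univ.filter (fun j => β j = 0), |βhat j - β j| ≤
      3 * ∑ j ∈ Finset.univ.filter (fun j => β j ≠ 0), |βhat j - β j| := by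
  have hA : ∑ j, |βhat j - β j| =
      (∑ j ∈ Finset.univ.filter (fun j => β j = 0), |βhat j - β j|) +
      ∑ j ∈ Finset.univ.filter (fun j => ¬ β j = 0), |βhat j - β j| :=
    (Finset.sum_filter_add_sum_filter_not Finset.univ (fun j => β j = 0) _).symm
  have hL : 0 ≤ (1 / (2 * (n:ℝ))) * ∑ i, ((X *ᵥ βhat) i - (X *ᵥ β) i) ^ 2 := by
    positivity
  have hb : ∑ j, |β j| - ∑ j, |βhat j| ≤
      (∑ j ∈ Finset.univ.filter (fun j => ¬ β j = 0), |βhat j - β j|) -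
      ∑ j ∈ Finset.univ.filter (fun j => β j = 0), |βhat j - β j| := by
    rw [← Finset.sum_filter_add_sum_filter_not Finset.univ (fun j => β j = 0) (fun j => |β j|),
        ← Finset.sum_filter_add_sum_filter_not Finset.univ (fun j => β j = 0) (fun j => |βhat j|)]
    have h1 : ∑ j ∈ Finset.univ.filter (fun j => β j = 0), |β j| = 0 :=
      Finset.sum_eq_zero (by intro j hj; simp at hj; simp [hj])
    have h2 : ∑ j ∈ Finset.univ.filter (fun j => β j = 0), |βhat j| =
        ∑ j ∈ Finset.univ.filter (fun j => β j = 0), |βhat j - β j| :=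
      Finset.sum_congr rfl (by intro j hj; simp at hj; rw [hj, sub_zero])
    have h3 : ∑ j ∈ Finset.univ.filter (fun j => ¬ β j = 0), |β j| -
        ∑ j ∈ Finset.univ.filter (fun j => ¬ β j = 0), |βhat j| ≤
        ∑ j ∈ Finset.univ.filter (fun j => ¬ β j = 0), |βhat j - β j| := by
      rw [← Finset.sum_sub_distrib]
      apply Finset.sum_le_sum
      intro j _
      have h := abs_sub_abs_le_abs_sub (β j) (βhat j)
      rw [abs_sub_comm] at h
      linarith
    linarith
  have hmul := mul_le_mul_of_nonneg_left hb hlam.le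
  have hSc : (Finset.univ.filter (fun j => β j ≠ 0)) =
      (Finset.univ.filter (fun j => ¬ β j = 0)) := rfl
  rw [hSc]
  set A := ∑ j ∈ Finset.univ.filter (fun j => ¬ β j = 0), |βhat j - β j| with hAdef
  set B := ∑ j ∈ Finset.univ.filter (fun j => β j = 0), |βhat j - β j| with hBdef
  rw [hA] at hbasic
  nlinarith [hbasic, hL, hmul, hlam]
end
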